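/- arXiv:2110.09569 — 3 statements merged into one kernel-verified Lean document; each statement's English description precedes it below -/
import Mathlib

section
/- Correctness of the big-M ReLU formulation: let w ∈ ℝ^d, b ∈ ℝ, and let Ω' ⊆ ℝ^d be nonempty. Suppose M₀ ≥ max_{x ∈ Ω'} (wᵀx + b) ≥ 0 and M₁ ≥ max_{x ∈ Ω'} -(wᵀx + b) ≥ 0. Then for any x ∈ Ω' and y ∈ ℝ, we have y = max(0, wᵀx + b) if and only if there exists α ∈ {0,1} such that 0 ≤ y ≤ M₀α and wᵀx + b ≤ y ≤ wᵀx + b + M₁(1 - α). -/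
open Finset

theorem big_M_relu_formulation_correct (d : ℕ) (w : Fin d → ℝ) (b M₀ M₁ : ℝ)
    (Ω' : Set (Fin d → ℝ)) (hne : Ω'.Nonempty)
    (hub0 : ∀ x ∈ Ω', ∑ i, w i * x i + b ≤ M₀)
    (hub1 : ∀ x ∈ Ω', -(∑ i, w i * x i + b) ≤ M₁)
    (hpos0 : ∃ x ∈ Ω', 0 ≤ ∑ i, w i * x i + b)
    (hpos1 : ∃ x ∈ Ω', 0 ≤ -(∑ i, w i * x i + b)) :
    ∀ x ∈ Ω', ∀ y : ℝ,
      y = max 0 (∑ i, w i * x i + b) ↔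
        ∃ α : ℝ, (α = 0 ∨ α = 1) ∧ 0 ≤ y ∧ y ≤ M₀ * α ∧
          ∑ i, w i * x i + b ≤ y ∧ y ≤ ∑ i, w i * x i + b + M₁ * (1 - α) := by
  intro x hx y
  set z := ∑ i, w i * x i + b with hz
  constructor
  · intro hy
    rcases le_or_gt z 0 with h | h
    · refine ⟨0, Or.inl rfl, ?_, ?_, ?_, ?_⟩ <;>
        simp [hy, max_eq_left h] <;> nlinarith [hub1 x hx]
    · refine ⟨1, Or.inr rfl, ?_, ?_, ?_, ?_⟩ <;>
        simp [hy, max_eq_right h.le] <;> nlinarith [hub0 x hx, h.le]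
  · rintro ⟨α, hα01, h0y, hyM, hzy, hyz⟩
    rcases hα01 with rfl | rfl
    · have : y = 0 := le_antisymm (by linarith) h0y
      rw [this, eq_comm, max_eq_left]; linarith
    · have : y = z := le_antisymm (by linarith) hzy
      rw [this, eq_comm, max_eq_right]; linarith
end

section
/- Path existence in the NAS-Bench-101 formulation: let m ∈ {0,1}^{V×V} define edges only for i < j, and z ∈ {0,1}^V with z_1 = z_V = 0 (nodes 1 and V are non-null). Suppose m and z satisfy the constraints m_{ij} ≤ 1 − z_i, m_{ij} ≤ 1 − z_j, ∑_{i<j} m_{ij} ≥ 1 − z_j for all j > 1, and ∑_{j>i} m_{ij} ≥ 1 − z_i for all i < V. Then there exists a directed path in the graph from node 1 to node V using only nodes i with z_i = 0. -/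
open Finset

theorem nasbench_input_output_path (n : ℕ)
    (m : Fin (n + 1) → Fin (n + 1) → ℤ) (z : Fin (n + 1) → ℤ)
    (hmbin : ∀ i j, m i j = 0 ∨ m i j = 1)
    (hzbin : ∀ i, z i = 0 ∨ z i = 1)
    (htri : ∀ i j : Fin (n + 1), ¬ i < j → m i j = 0)
    (hin0 : z 0 = 0) (houtV : z (Fin.last n) = 0)
    (hnullL : ∀ i j, m i j ≤ 1 - z i)
    (hnullR : ∀ i j, m i j ≤ 1 - z j)
    (hflowin : ∀ j : Fin (n + 1), j ≠ 0 →
      1 - z j ≤ ∑ i ∈ univ.filter (fun i => i < j), m i j)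
    (hflowout : ∀ i : Fin (n + 1), i ≠ Fin.last n →
      1 - z i ≤ ∑ j ∈ univ.filter (fun j => i < j), m i j) :
    ∃ (k : ℕ) (p : ℕ → Fin (n + 1)),
      p 0 = 0 ∧ p k = Fin.last n ∧
      (∀ t < k, m (p t) (p (t + 1)) = 1) ∧
      (∀ t ≤ k, z (p t) = 0) := by
  have aux : ∀ j : Fin (n + 1), z j = 0 → ∃ (k : ℕ) (p : ℕ → Fin (n + 1)),
      p 0 = 0 ∧ p k = j ∧
      (∀ t < k, m (p t) (p (t + 1)) = 1) ∧
      (∀ t ≤ k, z (p t) = 0) := by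
    have aux2 : ∀ N : ℕ, ∀ j : Fin (n + 1), j.val = N → z j = 0 →
        ∃ (k : ℕ) (p : ℕ → Fin (n + 1)),
        p 0 = 0 ∧ p k = j ∧
        (∀ t < k, m (p t) (p (t + 1)) = 1) ∧
        (∀ t ≤ k, z (p t) = 0) := by
      intro N
      induction N using Nat.strong_induction_on with
      | _ N ih =>
      intro j hjN hzj
      by_cases hj0 : j = 0
      · subst hj0
        exact ⟨0, fun _ => 0, rfl, rfl, fun t ht => absurd ht (Nat.not_lt_zero t),
          fun t _ => hin0⟩
      · have hsum := hflowin j hj0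
        rw [hzj] at hsum
        have hne : (∑ i ∈ univ.filter (fun i => i < j), m i j) ≠ 0 := by linarith
        obtain ⟨i, hi, hmi⟩ := Finset.exists_ne_zero_of_sum_ne_zero hne
        have hij : i < j := (Finset.mem_filter.mp hi).2
        have hm1 : m i j = 1 := (hmbin i j).resolve_left hmi
        have hzi : z i = 0 := by
          have := hnullL i j
          rw [hm1] at this
          rcases hzbin i with h | h
          · exact h
          · rw [h] at this; linarith
        obtain ⟨k, p, hp0, hpk, hedge, hnull⟩ := ih i.val (by rw [← hjN]; exact hij) i rfl hzi
        refine ⟨k + 1, fun t => if t = k + 1 then j else p t, ?_, ?_, ?_, ?_⟩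
        · simp [hp0]
        · simp
        · intro t ht
          rcases Nat.lt_or_ge t k with h | h
          · have h1 : t ≠ k + 1 := by omega
            have h2 : t + 1 ≠ k + 1 := by omega
            simp only [h1, h2, if_false]
            exact hedge t h
          · have ht' : t = k := by omega
            have h1 : t ≠ k + 1 := by omega
            have h2 : t + 1 = k + 1 := by omega
            simp only [h1, if_false, if_pos h2]
            rw [ht', hpk]; exact hm1
        · intro t ht
          rcases Nat.lt_or_ge t (k + 1) with h | h
          · have h1 : t ≠ k + 1 := by omega
            simp only [h1, if_false]
            exact hnull t (by omega)
          · have ht' : t = k + 1 := by omega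
            subst ht'
            simp [hzj]
    intro j
    exact aux2 j.val j rfl
  exact aux (Fin.last n) houtV
end

section
/- In the constraints of the previous formulation, every non-null node lies on some directed path from the input node 1 to the output node V: for any i with z_i = 0, there is a directed path from 1 to V passing through i. -/
/-! Call `i → j` an active edge when `m i j = 1`. The in-flow constraint gives every non-null node
other than `0` an active in-edge from a smaller non-null node (the null constraint makes its tail non-null), so
walking backwards from `v` along strictly decreasing nodes must end at `0`; symmetrically the out-flow constraint lets us walk forwards from `v` to the last node.
Concatenating the two walks gives the path through `v`. -/

open Finset Relation

section Walks

variable {α : Type*} {r : α → α → Prop}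

theorem exists_walk_of_reflTransGen {a b : α} (h : ReflTransGen r a b) :
    ∃ (k : ℕ) (p : ℕ → α), p 0 = a ∧ p k = b ∧ ∀ t < k, r (p t) (p (t + 1)) := by
  induction h with
  | refl => exact ⟨0, fun _ => a, rfl, rfl, by simp⟩
  | @tail _ c _ hbc ih =>
    obtain ⟨k, p, hp0, hpk, hp⟩ := ih
    refine ⟨k + 1, Function.update p (k + 1) c, by simpa using hp0, by simp, fun t ht => ?_⟩
    rcases Nat.lt_succ_iff_lt_or_eq.mp ht with ht | rfl
    · simpa [Function.update_apply, ht.ne, (Nat.lt_succ_of_lt ht).ne] using hp t ht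
    · simpa [hpk] using hbc

theorem exists_walk_through_of_reflTransGen {a b c : α} (hab : ReflTransGen r a b)
    (hbc : ReflTransGen r b c) :
    ∃ (k : ℕ) (p : ℕ → α), p 0 = a ∧ p k = c ∧ (∀ t < k, r (p t) (p (t + 1))) ∧
      ∃ t ≤ k, p t = b := by
  obtain ⟨k₁, p, hp0, hpk, hp⟩ := exists_walk_of_reflTransGen hab
  obtain ⟨k₂, q, hq0, hqk, hq⟩ := exists_walk_of_reflTransGen hbc
  refine ⟨k₁ + k₂, fun t => if t ≤ k₁ then p t else q (t - k₁), by simp [hp0], ?_, ?_,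
    k₁, by omega, by simp [hpk]⟩
  · rcases Nat.eq_zero_or_pos k₂ with rfl | hk₂
    · simp [hpk, ← hq0, hqk]
    · simpa [show ¬k₁ + k₂ ≤ k₁ by omega] using hqk
  · intro t ht
    rcases lt_trichotomy t k₁ with htk | rfl | htk
    · simpa [htk.le, Nat.succ_le_of_lt htk] using hp t htk
    · simpa [hpk, ← hq0] using hq 0 (by omega)
    · have hq' := hq (t - k₁) (by omega)
      rw [show t - k₁ + 1 = t + 1 - k₁ by omega] at hq'
      simpa [show ¬t ≤ k₁ by omega, show ¬t + 1 ≤ k₁ by omega] using hq'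

end Walks

section Reachability

variable {α : Type*} [Preorder α] {r : α → α → Prop} {P : α → Prop}

theorem reflTransGen_of_forall_exists_gt [WellFoundedGT α] {b : α}
    (hstep : ∀ i, P i → i ≠ b → ∃ j, i < j ∧ r i j ∧ P j) {i : α} (hi : P i) :
    ReflTransGen r i b := by
  induction i using WellFoundedGT.induction with
  | ind i ih =>
    by_cases hib : i = b
    · exact hib ▸ ReflTransGen.refl
    obtain ⟨j, hij, hr, hj⟩ := hstep i hi hib
    exact ReflTransGen.head hr (ih j hij hj)

theorem reflTransGen_of_forall_exists_lt [WellFoundedLT α] {a : α}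
    (hstep : ∀ j, P j → j ≠ a → ∃ i, i < j ∧ r i j ∧ P i) {j : α} (hj : P j) :
    ReflTransGen r a j := by
  induction j using WellFoundedLT.induction with
  | ind j ih =>
    by_cases hja : j = a
    · exact hja ▸ ReflTransGen.refl
    obtain ⟨i, hij, hr, hi⟩ := hstep j hj hja
    exact ReflTransGen.tail (ih i hij hi) hr

end Reachability

section NASBench

variable {n : ℕ} {m : Fin (n + 1) → Fin (n + 1) → ℤ} {z : Fin (n + 1) → ℤ}

theorem exists_active_out_edge (hmbin : ∀ i j, m i j = 0 ∨ m i j = 1)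
    (hnullR : ∀ i j, m i j ≤ 1 - z j)
    (hflowout : ∀ i : Fin (n + 1), i ≠ Fin.last n →
      1 - z i ≤ ∑ j ∈ univ.filter (fun j => i < j), m i j)
    {i : Fin (n + 1)} (hz : z i ≤ 0) (hi : i ≠ Fin.last n) :
    ∃ j, i < j ∧ m i j = 1 ∧ z j ≤ 0 := by
  have hsum : ∑ j ∈ univ.filter (fun j => i < j), m i j ≠ 0 := by linarith [hflowout i hi]
  obtain ⟨j, hij, hm⟩ := exists_ne_zero_of_sum_ne_zero hsum
  have hm1 : m i j = 1 := (hmbin i j).resolve_left hm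
  exact ⟨j, (mem_filter.mp hij).2, hm1, by linarith [hnullR i j]⟩

theorem exists_active_in_edge (hmbin : ∀ i j, m i j = 0 ∨ m i j = 1)
    (hnullL : ∀ i j, m i j ≤ 1 - z i)
    (hflowin : ∀ j : Fin (n + 1), j ≠ 0 →
      1 - z j ≤ ∑ i ∈ univ.filter (fun i => i < j), m i j)
    {j : Fin (n + 1)} (hz : z j ≤ 0) (hj : j ≠ 0) :
    ∃ i, i < j ∧ m i j = 1 ∧ z i ≤ 0 := by
  have hsum : ∑ i ∈ univ.filter (fun i => i < j), m i j ≠ 0 := by linarith [hflowin j hj]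
  obtain ⟨i, hij, hm⟩ := exists_ne_zero_of_sum_ne_zero hsum
  have hm1 : m i j = 1 := (hmbin i j).resolve_left hm
  exact ⟨i, (mem_filter.mp hij).2, hm1, by linarith [hnullL i j]⟩

end NASBench

theorem nasbench_every_nonnull_node_on_path_general (n : ℕ)
    (m : Fin (n + 1) → Fin (n + 1) → ℤ) (z : Fin (n + 1) → ℤ)
    (hmbin : ∀ i j, m i j = 0 ∨ m i j = 1)
    (hnullL : ∀ i j, m i j ≤ 1 - z i)
    (hnullR : ∀ i j, m i j ≤ 1 - z j)
    (hflowin : ∀ j : Fin (n + 1), j ≠ 0 →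
      1 - z j ≤ ∑ i ∈ univ.filter (fun i => i < j), m i j)
    (hflowout : ∀ i : Fin (n + 1), i ≠ Fin.last n →
      1 - z i ≤ ∑ j ∈ univ.filter (fun j => i < j), m i j) :
    ∀ v : Fin (n + 1), z v = 0 →
      ∃ (k : ℕ) (p : ℕ → Fin (n + 1)),
        p 0 = 0 ∧ p k = Fin.last n ∧
        (∀ t < k, m (p t) (p (t + 1)) = 1) ∧
        (∃ t ≤ k, p t = v) := by
  intro v hv
  have hv : z v ≤ 0 := hv.le
  have hfrom_input : ReflTransGen (fun i j => m i j = 1) 0 v :=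
    reflTransGen_of_forall_exists_lt
      (fun _ hj hj0 => exists_active_in_edge hmbin hnullL hflowin hj hj0) hv
  have hto_output : ReflTransGen (fun i j => m i j = 1) v (Fin.last n) :=
    reflTransGen_of_forall_exists_gt
      (fun _ hi hilast => exists_active_out_edge hmbin hnullR hflowout hi hilast) hv
  exact exists_walk_through_of_reflTransGen hfrom_input hto_output

theorem nasbench_every_nonnull_node_on_path (n : ℕ)
    (m : Fin (n + 1) → Fin (n + 1) → ℤ) (z : Fin (n + 1) → ℤ)
    (hmbin : ∀ i j, m i j = 0 ∨ m i j = 1)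
    (hzbin : ∀ i, z i = 0 ∨ z i = 1)
    (htri : ∀ i j : Fin (n + 1), ¬ i < j → m i j = 0)
    (hin0 : z 0 = 0) (houtV : z (Fin.last n) = 0)
    (hnullL : ∀ i j, m i j ≤ 1 - z i)
    (hnullR : ∀ i j, m i j ≤ 1 - z j)
    (hflowin : ∀ j : Fin (n + 1), j ≠ 0 →
      1 - z j ≤ ∑ i ∈ univ.filter (fun i => i < j), m i j)
    (hflowout : ∀ i : Fin (n + 1), i ≠ Fin.last n →
      1 - z i ≤ ∑ j ∈ univ.filter (fun j => i < j), m i j) :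
    ∀ v : Fin (n + 1), z v = 0 →
      ∃ (k : ℕ) (p : ℕ → Fin (n + 1)),
        p 0 = 0 ∧ p k = Fin.last n ∧
        (∀ t < k, m (p t) (p (t + 1)) = 1) ∧
        (∃ t ≤ k, p t = v) :=
  nasbench_every_nonnull_node_on_path_general n m z hmbin hnullL hnullR hflowin hflowout
end
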